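/- arXiv:2405.04329 — 6 statements merged into one kernel-verified Lean document; each statement's English description precedes it below -/
import Mathlib

section
/- Let p be a prime, (A, δ) a δ-ring at p, and a, d, r ∈ A with δ(d) a unit. Suppose given sequences (λ_u)_{u≥0}, (R_u)_{u≥0} in A and units (w_u)_{u≥0} in A^× satisfying: λ₀·δ(d) = −1, R₀·δ(d) = δ(r), w_u = 1 − δ(d^{p^{u+1}}·λ_u), λ_{u+1}·w_u = λ_u^p, and R_{u+1}·w_u = δ(R_u) + w₁(d^{p^{u+1}}·λ_u·δ^{u+1}(a), R_u) for all u ≥ 0. Then every λ_u is a unit of A, and the ideal of A generated by the set {δ^u(d·a − r) : u ≥ 0} coincides with the ideal generated by d·a − r together with the elements δ^u(a)^p − (−p + d^{p^{u+1}}·λ_u)·δ^{u+1}(a) − R_u for all u ≥ 0. -/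
/-- The universal polynomial `w₁(x, y) = −∑_{j=1}^{p−1} (binom(p,j)/p)·x^j·y^{p−j}`. -/
def w1 (p : ℕ) {A : Type*} [CommRing A] (x y : A) : A :=
  -∑ j ∈ Finset.Ico 1 p, ((p.choose j / p : ℕ) : A) * x ^ j * y ^ (p - j)

/-- A δ-ring structure at `p` on a commutative ring `A`. -/
structure DeltaRing (p : ℕ) (A : Type*) [CommRing A] where
  δ : A → A
  δ_one : δ 1 = 0
  δ_mul : ∀ x y : A, δ (x * y) = δ x * y ^ p + x ^ p * δ y + (p : A) * δ x * δ y
  δ_add : ∀ x y : A, δ (x + y) = δ x + δ y + w1 p x y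

/-- The Frobenius lift associated to a δ-ring: `φ(x) = x^p + p·δ(x)`. -/
def DeltaRing.phi {p : ℕ} {A : Type*} [CommRing A] (D : DeltaRing p A) : A → A :=
  fun x => x ^ p + (p : A) * D.δ x

section W1
variable {p : ℕ} {A : Type*} [CommRing A]

lemma w1_dvd_left (x y : A) : x ∣ w1 p x y := by
  refine Dvd.dvd.neg_right (Finset.dvd_sum fun j hj => ?_)
  have h1 : 1 ≤ j := (Finset.mem_Ico.mp hj).1
  exact Dvd.dvd.mul_right (Dvd.dvd.mul_left (dvd_pow_self x (by omega)) _) _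

lemma w1_dvd_right (x y : A) : y ∣ w1 p x y := by
  refine Dvd.dvd.neg_right (Finset.dvd_sum fun j hj => ?_)
  have h2 : j < p := (Finset.mem_Ico.mp hj).2
  exact Dvd.dvd.mul_left (dvd_pow_self y (by omega)) _

lemma w1_comm (x y : A) : w1 p x y = w1 p y x := by
  unfold w1
  congr 1
  refine Finset.sum_nbij' (fun j => p - j) (fun j => p - j) ?_ ?_ ?_ ?_ ?_ <;>
    intro j hj <;> simp only [Finset.mem_Ico] at * <;> try omega
  have h2 : j < p := hj.2
  have hps : p - (p - j) = j := by omega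
  have hcs : p.choose (p - j) = p.choose j := Nat.choose_symm (by omega)
  rw [hps, hcs]
  ring

lemma w1_dvd_sub (x x' y : A) : (x - x') ∣ (w1 p x y - w1 p x' y) := by
  unfold w1
  rw [neg_sub_neg, ← Finset.sum_sub_distrib]
  refine Finset.dvd_sum fun j hj => ?_
  have hd : x - x' ∣ x' ^ j - x ^ j := by
    simpa [neg_sub] using (sub_dvd_pow_sub_pow x x' j).neg_right
  have : ((p.choose j / p : ℕ) : A) * x' ^ j * y ^ (p - j) - ((p.choose j / p : ℕ) : A) * x ^ j * y ^ (p - j)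
      = ((p.choose j / p : ℕ) : A) * (x' ^ j - x ^ j) * y ^ (p - j) := by ring
  rw [this]
  exact Dvd.dvd.mul_right (Dvd.dvd.mul_left hd _) _

end W1

section W1b
variable {p : ℕ} {A : Type*} [CommRing A]

lemma w1_mul_pow (x y c : A) : w1 p (x * c) (y * c) = w1 p x y * c ^ p := by
  unfold w1
  rw [neg_mul, Finset.sum_mul]
  congr 1
  refine Finset.sum_congr rfl fun j hj => ?_
  simp only [Finset.mem_Ico] at hj
  have : c ^ j * c ^ (p - j) = c ^ p := by
    rw [← pow_add]; congr 1; omega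
  rw [mul_pow, mul_pow, ← this]; ring

lemma mul_w1 (hp : p.Prime) (x y : A) : (p : A) * w1 p x y = x ^ p + y ^ p - (x + y) ^ p := by
  have hp0 : 0 < p := hp.pos
  unfold w1
  have hap := add_pow x y p
  have hsplit : ∑ k ∈ Finset.range (p + 1), x ^ k * y ^ (p - k) * (p.choose k : A)
      = x ^ 0 * y ^ (p - 0) * (p.choose 0 : A)
        + (∑ k ∈ Finset.Ico 1 p, x ^ k * y ^ (p - k) * (p.choose k : A))
        + x ^ p * y ^ (p - p) * (p.choose p : A) := by
    rw [Finset.sum_range_succ, Finset.range_eq_Ico,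
      Finset.sum_eq_sum_Ico_succ_bot hp0 (fun k => x ^ k * y ^ (p - k) * (p.choose k : A))]
  have hterm : ∀ j ∈ Finset.Ico 1 p,
      (p : A) * (((p.choose j / p : ℕ) : A) * x ^ j * y ^ (p - j))
        = x ^ j * y ^ (p - j) * (p.choose j : A) := by
    intro j hj
    simp only [Finset.mem_Ico] at hj
    have hdvd : p ∣ p.choose j := hp.dvd_choose_self (by omega) hj.2
    have : (p : A) * ((p.choose j / p : ℕ) : A) = (p.choose j : A) := by
      rw [← Nat.cast_mul, Nat.mul_div_cancel' hdvd]
    calc (p : A) * (((p.choose j / p : ℕ) : A) * x ^ j * y ^ (p - j))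
        = ((p : A) * ((p.choose j / p : ℕ) : A)) * x ^ j * y ^ (p - j) := by ring
      _ = x ^ j * y ^ (p - j) * (p.choose j : A) := by rw [this]; ring
  rw [mul_neg, Finset.mul_sum, Finset.sum_congr rfl hterm]
  rw [hsplit] at hap
  simp only [pow_zero, Nat.sub_zero, Nat.choose_zero_right, Nat.choose_self, Nat.sub_self,
    Nat.cast_one, one_mul, mul_one] at hap
  linear_combination hap

end W1b

lemma w1_pmul {p : ℕ} {A : Type*} [CommRing A] (hp : p.Prime) (x y : A) :
    w1 p ((p : A) * x) y
      = -∑ j ∈ Finset.range (p - 1),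
          (p.choose (j + 1) : A) * (p : A) ^ j * x ^ (j + 1) * y ^ (p - 1 - j) := by
  unfold w1
  rw [Finset.sum_Ico_eq_sum_range]
  congr 1
  refine Finset.sum_congr (by congr 1) fun j hj => ?_
  simp only [Finset.mem_range] at hj
  have hdvd : p ∣ p.choose (1 + j) := hp.dvd_choose_self (by omega) (by omega)
  have hc : ((p.choose (1 + j) / p : ℕ) : A) * (p : A) ^ (1 + j) = (p.choose (j + 1) : A) * (p : A) ^ j := by
    calc ((p.choose (1 + j) / p : ℕ) : A) * (p : A) ^ (1 + j)
        = (((p.choose (1 + j) / p) * p : ℕ) : A) * (p : A) ^ j := by push_cast; ring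
      _ = (p.choose (j + 1) : A) * (p : A) ^ j := by rw [Nat.div_mul_cancel hdvd, Nat.add_comm 1 j]
  have he : p - (1 + j) = p - 1 - j := by omega
  rw [mul_pow, ← mul_assoc, hc, he]
  ring

lemma w1_map (p : ℕ) {A B : Type*} [CommRing A] [CommRing B] (f : A →+* B) (x y : A) :
    f (w1 p x y) = w1 p (f x) (f y) := by
  unfold w1
  rw [map_neg, map_sum]
  congr 1
  refine Finset.sum_congr rfl fun j hj => ?_
  rw [map_mul, map_mul, map_pow, map_pow, map_natCast]

section Dlem
variable {p : ℕ} {A : Type*} [CommRing A] (D : DeltaRing p A)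

lemma w1_zero_left (y : A) : w1 p (0 : A) y = 0 := by
  simpa using w1_dvd_left (0 : A) y

lemma delta_zero : D.δ 0 = 0 := by
  have := D.δ_add 0 0
  rw [add_zero, w1_zero_left] at this
  linear_combination -this

lemma delta_sub (x y : A) : D.δ (x - y) = D.δ x - D.δ y - w1 p (x - y) y := by
  have := D.δ_add (x - y) y
  rw [sub_add_cancel] at this
  linear_combination -this

include D in
lemma w1_cocycle (x y z : A) :
    w1 p x y + w1 p (x + y) z = w1 p y z + w1 p x (y + z) := by
  have h1 := D.δ_add (x + y) z
  have h2 := D.δ_add x y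
  have h3 := D.δ_add x (y + z)
  have h4 := D.δ_add y z
  have e : x + y + z = x + (y + z) := by ring
  rw [e] at h1
  rw [h3, h4] at h1
  rw [h2] at h1
  linear_combination -h1

lemma delta_natCast (hp : p.Prime) : ∀ n : ℕ, ∃ m : ℤ,
    (p : ℤ) * m = (n : ℤ) - (n : ℤ) ^ p ∧ D.δ (n : A) = (m : A) := by
  intro n
  induction n with
  | zero =>
    refine ⟨0, by simp [hp.pos.ne'], ?_⟩
    simpa using delta_zero D
  | succ n ih =>
    obtain ⟨m, hm1, hm2⟩ := ih
    refine ⟨m + w1 p (n : ℤ) 1, ?_, ?_⟩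
    · have h6 := mul_w1 hp (n : ℤ) 1
      push_cast
      ring_nf
      ring_nf at hm1 h6
      linarith [hm1, h6]
    · have : ((n : ℕ) + 1 : A) = (n : A) + 1 := by push_cast; ring
      push_cast
      rw [this, D.δ_add, hm2, D.δ_one]
      have := w1_map p (Int.castRingHom A) (n : ℤ) 1
      simp at this
      rw [← this]
      push_cast
      ring

lemma delta_p (hp : p.Prime) : D.δ (p : A) = ((1 - (p : ℤ) ^ (p - 1) : ℤ) : A) := by
  obtain ⟨m, hm1, hm2⟩ := delta_natCast D hp p
  have hp0 : 0 < p := hp.pos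
  have hpp : (p : ℤ) * (p : ℤ) ^ (p - 1) = (p : ℤ) ^ p := by
    have h : p - 1 + 1 = p := by omega
    calc (p : ℤ) * (p : ℤ) ^ (p - 1) = (p : ℤ) ^ (p - 1) * (p : ℤ) := by ring
      _ = (p : ℤ) ^ (p - 1 + 1) := (pow_succ _ _).symm
      _ = (p : ℤ) ^ p := by rw [h]
  have : m = 1 - (p : ℤ) ^ (p - 1) := by
    have hpne : (p : ℤ) ≠ 0 := by exact_mod_cast hp.pos.ne'
    apply mul_left_cancel₀ hpne
    rw [hm1]
    linear_combination hpp
  rw [hm2, this]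

lemma phi_one : D.phi 1 = 1 := by
  unfold DeltaRing.phi
  rw [D.δ_one, one_pow]; ring

lemma phi_mul (x y : A) : D.phi (x * y) = D.phi x * D.phi y := by
  unfold DeltaRing.phi
  rw [D.δ_mul]; ring

lemma isUnit_phi {x : A} (hx : IsUnit x) : IsUnit (D.phi x) := by
  obtain ⟨u, rfl⟩ := hx
  refine IsUnit.of_mul_eq_one (D.phi (↑u⁻¹)) ?_
  rw [← phi_mul, Units.mul_inv, phi_one]

lemma p_mul_delta_p (hp : p.Prime) : (p : A) * D.δ (p : A) = (p : A) - (p : A) ^ p := by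
  have hp0 : 0 < p := hp.pos
  rw [delta_p D hp]
  push_cast
  have h2 : (p : A) ^ (p - 1) * (p : A) = (p : A) ^ p := by
    rw [← pow_succ, show p - 1 + 1 = p by omega]
  linear_combination -h2

lemma delta_p_mul (hp : p.Prime) (t : A) :
    D.δ ((p : A) * t) = D.δ (p : A) * t ^ p + (p : A) * D.δ t := by
  rw [D.δ_mul]
  have := p_mul_delta_p D hp
  linear_combination D.δ t * this

lemma delta_pow (x : A) : ∀ n : ℕ, D.δ (x ^ n) =
    ∑ j ∈ Finset.range n,
      (n.choose (j + 1) : A) * (p : A) ^ j * (D.δ x) ^ (j + 1) * (x ^ p) ^ (n - 1 - j) := by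
  intro n
  induction n with
  | zero => simpa using D.δ_one
  | succ n ih =>
    have hx : x ^ (n + 1) = x * x ^ n := by rw [pow_succ]; ring
    rw [hx, D.δ_mul, ih]
    have h1 : ∑ j ∈ Finset.range (n + 1),
          ((n+1).choose (j + 1) : A) * (p : A) ^ j * (D.δ x) ^ (j + 1) * (x ^ p) ^ (n - j)
        = (∑ j ∈ Finset.range (n + 1),
            (n.choose j : A) * (p : A) ^ j * (D.δ x) ^ (j + 1) * (x ^ p) ^ (n - j))
          + ∑ j ∈ Finset.range (n + 1),
            (n.choose (j + 1) : A) * (p : A) ^ j * (D.δ x) ^ (j + 1) * (x ^ p) ^ (n - j) := by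
      rw [← Finset.sum_add_distrib]
      refine Finset.sum_congr rfl fun j hj => ?_
      rw [Nat.choose_succ_succ]
      push_cast; ring
    have h2 : ∑ j ∈ Finset.range (n + 1),
          (n.choose (j + 1) : A) * (p : A) ^ j * (D.δ x) ^ (j + 1) * (x ^ p) ^ (n - j)
        = x ^ p * ∑ j ∈ Finset.range n,
            (n.choose (j + 1) : A) * (p : A) ^ j * (D.δ x) ^ (j + 1) * (x ^ p) ^ (n - 1 - j) := by
      rw [Finset.sum_range_succ, Nat.choose_succ_self]
      push_cast
      rw [Finset.mul_sum]
      simp only [zero_mul, mul_zero, add_zero]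
      refine Finset.sum_congr rfl fun j hj => ?_
      simp only [Finset.mem_range] at hj
      have : (x ^ p) ^ (n - j) = x ^ p * (x ^ p) ^ (n - 1 - j) := by
        rw [← pow_succ', show n - 1 - j + 1 = n - j by omega]
      rw [this]; ring
    have h3 : ∑ j ∈ Finset.range (n + 1),
          (n.choose j : A) * (p : A) ^ j * (D.δ x) ^ (j + 1) * (x ^ p) ^ (n - j)
        = D.δ x * (x ^ n) ^ p + (p : A) * D.δ x * ∑ j ∈ Finset.range n,
            (n.choose (j + 1) : A) * (p : A) ^ j * (D.δ x) ^ (j + 1) * (x ^ p) ^ (n - 1 - j) := by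
      rw [Finset.sum_range_succ']
      have h0 : (n.choose 0 : A) * (p : A) ^ 0 * (D.δ x) ^ (0 + 1) * (x ^ p) ^ (n - 0)
          = D.δ x * (x ^ n) ^ p := by
        rw [Nat.choose_zero_right, ← pow_mul, ← pow_mul]
        push_cast
        rw [Nat.sub_zero, mul_comm p n]
        ring
      rw [h0]
      have : ∀ j ∈ Finset.range n,
          (n.choose (j + 1) : A) * (p : A) ^ (j + 1) * (D.δ x) ^ (j + 1 + 1) * (x ^ p) ^ (n - (j + 1))
          = (p : A) * D.δ x * ((n.choose (j + 1) : A) * (p : A) ^ j * (D.δ x) ^ (j + 1) * (x ^ p) ^ (n - 1 - j)) := by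
        intro j hj
        simp only [Finset.mem_range] at hj
        rw [show n - (j + 1) = n - 1 - j by omega]
        ring
      rw [Finset.sum_congr rfl this, ← Finset.mul_sum]
      ring
    rw [show n + 1 - 1 = n by omega] at *
    rw [h1, h2, h3]
    ring

lemma mem_of_dvd_mem {J : Ideal A} {x y : A} (hx : x ∈ J) (h : x ∣ y) : y ∈ J := by
  obtain ⟨c, rfl⟩ := h
  exact J.mul_mem_right c hx

lemma delta_mem_span (hp : p.Prime) (S : Set A) (J : Ideal A) (hS : S ⊆ ↑J)
    (hδS : ∀ s ∈ S, D.δ s ∈ J) : ∀ x ∈ Ideal.span S, D.δ x ∈ J := by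
  intro x hx
  have hSJ : Ideal.span S ≤ J := Ideal.span_le.mpr hS
  induction hx using Submodule.span_induction with
  | mem s hs => exact hδS s hs
  | zero => rw [delta_zero]; exact J.zero_mem
  | add u v hu hv ihu ihv =>
    rw [D.δ_add]
    refine J.add_mem (J.add_mem ihu ihv) ?_
    exact mem_of_dvd_mem (hSJ hu) (w1_dvd_left u v)
  | smul t u hu ihu =>
    have : t • u = t * u := rfl
    rw [this, D.δ_mul]
    have hu' : u ∈ J := hSJ hu
    have hup : u ^ p ∈ J := by
      have h : u ^ p = u ^ (p - 1) * u := by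
        rw [← pow_succ, show p - 1 + 1 = p from by have := hp.pos; omega]
      rw [h]
      exact J.mul_mem_left _ hu'
    refine J.add_mem (J.add_mem ?_ ?_) ?_
    · exact mem_of_dvd_mem hu' (Dvd.dvd.mul_left (dvd_pow_self u hp.pos.ne') _)
    · exact J.mul_mem_left _ ihu
    · exact J.mul_mem_left _ ihu

lemma delta_congr_span (hp : p.Prime) (S : Set A) (J : Ideal A) (hS : S ⊆ ↑J)
    (hδS : ∀ s ∈ S, D.δ s ∈ J) {x y : A} (hxy : x - y ∈ Ideal.span S) :
    D.δ x - D.δ y ∈ J := by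
  have h1 : D.δ x = D.δ (x - y) + D.δ y + w1 p (x - y) y := by
    have := D.δ_add (x - y) y
    rw [sub_add_cancel] at this
    linear_combination this
  have h2 : D.δ (x - y) ∈ J := delta_mem_span D hp S J hS hδS _ hxy
  have h3 : w1 p (x - y) y ∈ J :=
    mem_of_dvd_mem (Ideal.span_le.mpr hS hxy) (w1_dvd_left _ _)
  have : D.δ x - D.δ y = D.δ (x - y) + w1 p (x - y) y := by linear_combination h1
  rw [this]
  exact J.add_mem h2 h3

lemma key_step (hp : p.Prime) (b c e μ μ' w' R R' : A)
    (hc : c = D.δ b) (he : e = D.δ c)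
    (hw' : w' = 1 - D.δ μ) (hμ' : μ' * w' = μ ^ p)
    (hR' : R' * w' = D.δ R + w1 p (μ * c) R) :
    D.δ (b ^ p - (-(p : A) + μ) * c - R) - w' * (c ^ p - (-(p : A) + μ') * e - R')
      ∈ Ideal.span {b ^ p - (-(p : A) + μ) * c - R} := by
  have hp0 : 0 < p := hp.pos
  set ν : A := μ - (p : A) with hν
  set f : A := b ^ p - (-(p : A) + μ) * c - R with hfdef
  have hfs : f + (ν * c + R) = b ^ p := by rw [hfdef, hν]; ring
  have hfs' : b ^ p - (ν * c + R) = f := by rw [hfdef, hν]; ring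
  have hA : D.δ (b ^ p) = D.δ f + (D.δ (ν * c) + D.δ R + w1 p (ν * c) R)
      + w1 p f (ν * c + R) := by
    rw [← hfs, D.δ_add, D.δ_add]
  have hB : D.δ (b ^ p) = ∑ j ∈ Finset.range p,
      (p.choose (j + 1) : A) * (p : A) ^ j * c ^ (j + 1) * (b ^ p) ^ (p - 1 - j) := by
    rw [hc]; exact delta_pow D b p
  have hδνc : D.δ (ν * c) = D.δ ν * c ^ p + ν ^ p * e + (p : A) * D.δ ν * e := by
    rw [D.δ_mul, he]
  have hδν : D.δ ν = D.δ μ - D.δ (p : A) - w1 p ν (p : A) := by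
    rw [hν]; exact delta_sub D μ (p : A)
  have F1 : (p : A) * w1 p ν (p : A) = ν ^ p + (p : A) ^ p - μ ^ p := by
    have h := mul_w1 hp ν (p : A)
    rw [show ν + (p : A) = μ by rw [hν]; ring] at h
    exact h
  have F2 : w1 p ((p : A) * c) (ν * c) = w1 p ν (p : A) * c ^ p := by
    rw [w1_comm, w1_mul_pow]
  have F3 : w1 p ((p : A) * c) (ν * c) + w1 p (μ * c) R
      = w1 p (ν * c) R + w1 p ((p : A) * c) (ν * c + R) := by
    have h := w1_cocycle D ((p : A) * c) (ν * c) R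
    rw [show (p : A) * c + ν * c = μ * c by rw [hν]; ring] at h
    exact h
  have F4 : w1 p ((p : A) * c) (ν * c + R)
      = -∑ j ∈ Finset.range (p - 1),
          (p.choose (j + 1) : A) * (p : A) ^ j * c ^ (j + 1) * (ν * c + R) ^ (p - 1 - j) :=
    w1_pmul hp c (ν * c + R)
  have F5 : (p : A) * D.δ (p : A) = (p : A) - (p : A) ^ p := p_mul_delta_p D hp
  have F6 : D.δ (p : A) = 1 - (p : A) ^ (p - 1) := by
    rw [delta_p D hp]; push_cast; ring
  have hsplitS : ∑ j ∈ Finset.range p,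
        (p.choose (j + 1) : A) * (p : A) ^ j * c ^ (j + 1) * (ν * c + R) ^ (p - 1 - j)
      = (∑ j ∈ Finset.range (p - 1),
          (p.choose (j + 1) : A) * (p : A) ^ j * c ^ (j + 1) * (ν * c + R) ^ (p - 1 - j))
        + (p : A) ^ (p - 1) * c ^ p := by
    have h1 : p = (p - 1) + 1 := by omega
    rw [show (Finset.range p) = Finset.range ((p - 1) + 1) by rw [← h1], Finset.sum_range_succ]
    congr 1
    rw [show p - 1 + 1 = p by omega, Nat.choose_self, Nat.sub_self, pow_zero]
    push_cast; ring
  have hC : (∑ j ∈ Finset.range p,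
        (p.choose (j + 1) : A) * (p : A) ^ j * c ^ (j + 1) * (b ^ p) ^ (p - 1 - j))
      - (∑ j ∈ Finset.range p,
        (p.choose (j + 1) : A) * (p : A) ^ j * c ^ (j + 1) * (ν * c + R) ^ (p - 1 - j))
      ∈ Ideal.span {f} := by
    rw [← Finset.sum_sub_distrib]
    refine Submodule.sum_mem _ fun j hj => ?_
    have hdvd : f ∣ (b ^ p) ^ (p - 1 - j) - (ν * c + R) ^ (p - 1 - j) := by
      rw [← hfs']
      exact sub_dvd_pow_sub_pow _ _ _
    refine Ideal.mem_span_singleton.mpr ?_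
    have : (p.choose (j + 1) : A) * (p : A) ^ j * c ^ (j + 1) * (b ^ p) ^ (p - 1 - j)
        - (p.choose (j + 1) : A) * (p : A) ^ j * c ^ (j + 1) * (ν * c + R) ^ (p - 1 - j)
        = (p.choose (j + 1) : A) * (p : A) ^ j * c ^ (j + 1)
          * ((b ^ p) ^ (p - 1 - j) - (ν * c + R) ^ (p - 1 - j)) := by ring
    rw [this]
    exact Dvd.dvd.mul_left hdvd _
  have hwfs : w1 p f (ν * c + R) ∈ Ideal.span {f} :=
    Ideal.mem_span_singleton.mpr (w1_dvd_left _ _)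
  have hE : D.δ f - w' * (c ^ p - (-(p : A) + μ') * e - R')
      = ((∑ j ∈ Finset.range p,
          (p.choose (j + 1) : A) * (p : A) ^ j * c ^ (j + 1) * (b ^ p) ^ (p - 1 - j))
        - (∑ j ∈ Finset.range p,
          (p.choose (j + 1) : A) * (p : A) ^ j * c ^ (j + 1) * (ν * c + R) ^ (p - 1 - j)))
        - w1 p f (ν * c + R) := by
    linear_combination (-1 : A) * hA + hB + hR' + e * hμ' - (c ^ p + (p : A) * e) * hw'
      - hδνc - (c ^ p + (p : A) * e) * hδν + e * F5 + e * F1 + c ^ p * F6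
      + hsplitS + F4 + F3 - F2
  rw [hE]
  exact Submodule.sub_mem _ hC hwfs

lemma key_base (a d r l0 R0 : A)
    (hlam0 : l0 * D.δ d = -1) (hR0 : R0 * D.δ d = D.δ r) :
    D.δ (d * a - r) - D.δ d * (a ^ p - (-(p : A) + d ^ p * l0) * D.δ a - R0)
      ∈ Ideal.span {d * a - r} := by
  have h1 : D.δ (d * a - r) = D.δ (d * a) - D.δ r - w1 p (d * a - r) r :=
    delta_sub D (d * a) r
  have h2 : D.δ (d * a) = D.δ d * a ^ p + d ^ p * D.δ a + (p : A) * D.δ d * D.δ a :=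
    D.δ_mul d a
  have hE : D.δ (d * a - r) - D.δ d * (a ^ p - (-(p : A) + d ^ p * l0) * D.δ a - R0)
      = -w1 p (d * a - r) r := by
    linear_combination h1 + h2 + hR0 + (d ^ p * D.δ a) * hlam0
  rw [hE]
  exact Submodule.neg_mem _ (Ideal.mem_span_singleton.mpr (w1_dvd_left _ _))

end Dlem

theorem statement3 (p : ℕ) (hp : p.Prime) {A : Type*} [CommRing A]
    (D : DeltaRing p A) (a d r : A) (hd : IsUnit (D.δ d))
    (lam Rr w : ℕ → A) (hw : ∀ u, IsUnit (w u))
    (hlam0 : lam 0 * D.δ d = -1)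
    (hR0 : Rr 0 * D.δ d = D.δ r)
    (hwdef : ∀ u, w u = 1 - D.δ (d ^ p ^ (u + 1) * lam u))
    (hlamS : ∀ u, lam (u + 1) * w u = lam u ^ p)
    (hRS : ∀ u, Rr (u + 1) * w u =
      D.δ (Rr u) + w1 p (d ^ p ^ (u + 1) * lam u * D.δ^[u + 1] a) (Rr u)) :
    (∀ u, IsUnit (lam u)) ∧
    Ideal.span (Set.range fun u => D.δ^[u] (d * a - r)) =
      Ideal.span (insert (d * a - r)
        (Set.range fun u =>
          (D.δ^[u] a) ^ p - (-(p : A) + d ^ p ^ (u + 1) * lam u) * D.δ^[u + 1] a - Rr u)) := by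
  have hp0 : 0 < p := hp.pos
  -- units
  have hunit : ∀ u, IsUnit (lam u) := by
    intro u
    induction u with
    | zero =>
      refine IsUnit.of_mul_eq_one (-(D.δ d)) ?_
      linear_combination -hlam0
    | succ u ih =>
      have : IsUnit (lam (u + 1) * w u) := by
        rw [hlamS u]; exact ih.pow p
      exact isUnit_of_mul_isUnit_left this
  refine ⟨hunit, ?_⟩
  set g : A := d * a - r with hg
  set F : ℕ → A := fun u => D.δ^[u] g with hF
  set fu : ℕ → A := fun u =>
    (D.δ^[u] a) ^ p - (-(p : A) + d ^ p ^ (u + 1) * lam u) * D.δ^[u + 1] a - Rr u with hfu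
  set I : ℕ → Ideal A := fun u => Ideal.span (F '' Set.Iic u) with hI
  -- the main inductive fact
  have hmain : ∀ u, ∃ α : A, IsUnit α ∧ D.δ^[u + 1] g - α * fu u ∈ I u := by
    intro u
    induction u with
    | zero =>
      refine ⟨D.δ d, hd, ?_⟩
      have hbase := key_base D a d r (lam 0) (Rr 0) hlam0 hR0
      have h0 : fu 0 = a ^ p - (-(p : A) + d ^ p * lam 0) * D.δ a - Rr 0 := by
        simp [hfu, pow_one]
      have h1 : D.δ^[0 + 1] g = D.δ g := by simp
      have h2 : I 0 = Ideal.span {g} := by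
        show Ideal.span (F '' Set.Iic 0) = Ideal.span {g}
        have himg : F '' Set.Iic 0 = {g} := by
          ext x
          constructor
          · rintro ⟨j, hj, rfl⟩
            simp only [Set.mem_Iic, Nat.le_zero] at hj
            subst hj
            simp [hF]
          · intro hx
            rw [Set.mem_singleton_iff] at hx
            exact ⟨0, by simp, by simp [hF, hx.symm]⟩
        rw [himg]
      rw [h0, h1, h2, hg]
      exact hbase
    | succ u ih =>
      obtain ⟨α, hα, hmem⟩ := ih
      set J : Ideal A := I (u + 1) with hJ
      have hFmem : ∀ j, j ≤ u + 1 → F j ∈ J := by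
        intro j hj
        exact Ideal.subset_span ⟨j, hj, rfl⟩
      have hIJ : I u ≤ J := by
        rw [hI, hJ, hI]
        exact Ideal.span_mono (Set.image_mono (Set.Iic_subset_Iic.mpr (by omega)))
      have hSJ : F '' Set.Iic u ⊆ ↑J := by
        rintro x ⟨j, hj, rfl⟩
        exact hFmem j (by simpa using Nat.le_succ_of_le hj)
      have hδS : ∀ s ∈ F '' Set.Iic u, D.δ s ∈ J := by
        rintro s ⟨j, hj, rfl⟩
        have : D.δ (F j) = F (j + 1) := by
          rw [hF]
          exact (Function.iterate_succ_apply' D.δ j g).symm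
        rw [this]
        exact hFmem (j + 1) (by simpa using hj)
      have h1 : D.δ (D.δ^[u + 1] g) - D.δ (α * fu u) ∈ J :=
        delta_congr_span D hp (F '' Set.Iic u) J hSJ hδS hmem
      have hit : D.δ (D.δ^[u + 1] g) = D.δ^[u + 2] g :=
        (Function.iterate_succ_apply' D.δ (u + 1) g).symm
      have hfuJ : fu u ∈ J := by
        have hm : α * fu u ∈ J := by
          have : α * fu u = D.δ^[u + 1] g - (D.δ^[u + 1] g - α * fu u) := by ring
          rw [this]
          exact Submodule.sub_mem _ (hFmem (u + 1) le_rfl) (hIJ hmem)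
        obtain ⟨v, rfl⟩ := hα
        have := J.mul_mem_left (↑v⁻¹) hm
        rwa [← mul_assoc, Units.inv_mul, one_mul] at this
      -- key step
      have hc : D.δ^[u + 1] a = D.δ (D.δ^[u] a) := Function.iterate_succ_apply' D.δ u a
      have he : D.δ^[u + 2] a = D.δ (D.δ^[u + 1] a) := Function.iterate_succ_apply' D.δ (u + 1) a
      have hμ' : (d ^ p ^ (u + 2) * lam (u + 1)) * w u = (d ^ p ^ (u + 1) * lam u) ^ p := by
        have hdp : (d ^ p ^ (u + 1)) ^ p = d ^ p ^ (u + 2) := by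
          rw [← pow_mul, ← pow_succ]
        rw [mul_pow, hdp]
        linear_combination d ^ p ^ (u + 2) * hlamS u
      have hkey := key_step D hp (D.δ^[u] a) (D.δ^[u + 1] a) (D.δ^[u + 2] a)
        (d ^ p ^ (u + 1) * lam u) (d ^ p ^ (u + 2) * lam (u + 1)) (w u) (Rr u) (Rr (u + 1))
        hc he (hwdef u) hμ' (hRS u)
      have hkey' : D.δ (fu u) - w u * fu (u + 1) ∈ Ideal.span {fu u} := by
        simpa [hfu] using hkey
      obtain ⟨t, ht⟩ := Ideal.mem_span_singleton.mp hkey'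
      refine ⟨(α ^ p + (p : A) * D.δ α) * w u, ?_, ?_⟩
      · have : (α ^ p + (p : A) * D.δ α) = D.phi α := rfl
        rw [this]
        exact (isUnit_phi D hα).mul (hw u)
      · have h2 : D.δ (α * fu u) = D.δ α * (fu u) ^ p
            + (α ^ p + (p : A) * D.δ α) * D.δ (fu u) := by
          rw [D.δ_mul]; ring
        have hsum : D.δ^[u + 1 + 1] g - (α ^ p + (p : A) * D.δ α) * w u * fu (u + 1)
            = (D.δ (D.δ^[u + 1] g) - D.δ (α * fu u)) + D.δ α * (fu u) ^ p
              + (α ^ p + (p : A) * D.δ α) * (fu u * t) := by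
          rw [show u + 1 + 1 = u + 2 from rfl, ← hit]
          linear_combination h2 + (α ^ p + (p : A) * D.δ α) * ht
        rw [hsum]
        refine Submodule.add_mem _ (Submodule.add_mem _ h1 ?_) ?_
        · exact J.mul_mem_left _ (mem_of_dvd_mem hfuJ (dvd_pow_self _ hp.pos.ne'))
        · exact J.mul_mem_left _ (J.mul_mem_right t hfuJ)
  -- assemble ideals
  set K : Ideal A := Ideal.span (insert g (Set.range fu)) with hK
  set L : Ideal A := Ideal.span (Set.range F) with hL
  have hFL : ∀ u, F u ∈ L := fun u => Ideal.subset_span ⟨u, rfl⟩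
  have hfuL : ∀ u, fu u ∈ L := by
    intro u
    obtain ⟨α, hα, hmem⟩ := hmain u
    have hIL : I u ≤ L := by
      rw [hI, hL]
      refine Ideal.span_le.mpr ?_
      rintro x ⟨j, hj, rfl⟩
      exact Ideal.subset_span ⟨j, rfl⟩
    have hm : α * fu u ∈ L := by
      have : α * fu u = D.δ^[u + 1] g - (D.δ^[u + 1] g - α * fu u) := by ring
      rw [this]
      exact Submodule.sub_mem _ (hFL (u + 1)) (hIL hmem)
    obtain ⟨v, rfl⟩ := hα
    have := L.mul_mem_left (↑v⁻¹) hm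
    rwa [← mul_assoc, Units.inv_mul, one_mul] at this
  have hFK : ∀ u, F u ∈ K := by
    intro u
    induction u using Nat.strong_induction_on with
    | _ u ih =>
      match u with
      | 0 => exact Ideal.subset_span (Set.mem_insert _ _)
      | Nat.succ u =>
        obtain ⟨α, hα, hmem⟩ := hmain u
        have hIK : I u ≤ K := by
          rw [hI]
          refine Ideal.span_le.mpr ?_
          rintro x ⟨j, hj, rfl⟩
          exact ih j (by simpa using Nat.lt_succ_of_le hj)
        have : F (u + 1) = (D.δ^[u + 1] g - α * fu u) + α * fu u := by
          rw [hF]; ring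
        rw [this]
        exact Submodule.add_mem _ (hIK hmem)
          (K.mul_mem_left α (Ideal.subset_span (Set.mem_insert_of_mem _ ⟨u, rfl⟩)))
  show L = K
  apply le_antisymm
  · rw [hL]
    refine Ideal.span_le.mpr ?_
    rintro x ⟨u, rfl⟩
    exact hFK u
  · rw [hK]
    refine Ideal.span_le.mpr ?_
    rintro x hx
    rcases Set.mem_insert_iff.mp hx with h | ⟨u, rfl⟩
    · rw [h]
      simpa [hF] using hFL 0
    · exact hfuL u
end

section
/- Let p be a prime, (A, δ) a δ-ring at p, and d ∈ A such that δ(d) is a unit and the ideal generated by p and d is contained in the Jacobson radical of A. Then for every integer r ≥ 1 there exists a unit u_r ∈ A^× such that φ^r(d) − p·u_r lies in the principal ideal of A generated by the product d·φ(d)·φ²(d)···φ^{r−1}(d), where φ^s denotes the s-fold iterate of the Frobenius lift φ. -/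
section Aux

variable {p : ℕ} {A : Type*} [CommRing A]

lemma phi_add (hp : p.Prime) (D : DeltaRing p A) (x y : A) :
    D.phi (x + y) = D.phi x + D.phi y := by
  have hp2 := hp.two_le
  simp only [DeltaRing.phi, D.δ_add, w1]
  have h1 : ∀ j ∈ Finset.Ico 1 p,
      (p : A) * (((p.choose j / p : ℕ) : A) * x ^ j * y ^ (p - j))
        = (p.choose j : A) * (x ^ j * y ^ (p - j)) := by
    intro j hj
    simp only [Finset.mem_Ico] at hj
    have hdvd : p ∣ p.choose j := hp.dvd_choose_self (by omega) hj.2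
    have hc : (p : A) * ((p.choose j / p : ℕ) : A) = ((p.choose j : ℕ) : A) := by
      rw [← Nat.cast_mul, Nat.mul_div_cancel' hdvd]
    calc (p : A) * (((p.choose j / p : ℕ) : A) * x ^ j * y ^ (p - j))
        = ((p : A) * ((p.choose j / p : ℕ) : A)) * (x ^ j * y ^ (p - j)) := by ring
      _ = (p.choose j : A) * (x ^ j * y ^ (p - j)) := by rw [hc]
  have hpow : (x + y) ^ p
      = y ^ p + x ^ p + ∑ j ∈ Finset.Ico 1 p, (p.choose j : A) * (x ^ j * y ^ (p - j)) := by
    rw [add_pow, Finset.range_eq_Ico, Finset.sum_eq_sum_Ico_succ_bot (by omega),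
      Finset.sum_Ico_succ_top (by omega)]
    have : ∀ j ∈ Finset.Ico 1 p,
        x ^ j * y ^ (p - j) * (p.choose j : A) = (p.choose j : A) * (x ^ j * y ^ (p - j)) := by
      intro j _; ring
    rw [Finset.sum_congr rfl this]
    simp [Nat.choose_self]
    ring
  have key : (p : A) * ∑ j ∈ Finset.Ico 1 p,
      ((p.choose j / p : ℕ) : A) * x ^ j * y ^ (p - j)
      = ∑ j ∈ Finset.Ico 1 p, (p.choose j : A) * (x ^ j * y ^ (p - j)) := by
    rw [Finset.mul_sum]; exact Finset.sum_congr rfl h1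
  rw [hpow]
  rw [mul_add, mul_add, mul_neg, key]
  ring

/-- The Frobenius lift as a ring homomorphism. -/
def phiHom (hp : p.Prime) (D : DeltaRing p A) : A →+* A where
  toFun := D.phi
  map_one' := by simp [DeltaRing.phi, D.δ_one, one_pow]
  map_mul' := fun x y => by
    simp only [DeltaRing.phi, D.δ_mul, mul_pow]; ring
  map_zero' := by
    have h := phi_add hp D 0 0
    rw [add_zero] at h
    exact (left_eq_add.mp h)
  map_add' := phi_add hp D

lemma coe_phiHom (hp : p.Prime) (D : DeltaRing p A) : ⇑(phiHom hp D) = D.phi := rfl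

lemma p_sq_dvd (hp : p.Prime) (a b : A) : (p : A) ^ 2 ∣ ((p : A) * a + b) ^ p - b ^ p := by
  have hp2 := hp.two_le
  rw [add_pow, Finset.range_eq_Ico, Finset.sum_eq_sum_Ico_succ_bot (by omega)]
  simp only [pow_zero, one_mul, Nat.sub_zero, Nat.choose_zero_right, Nat.cast_one, mul_one]
  rw [add_sub_cancel_left]
  apply Finset.dvd_sum
  intro j hj
  simp only [Finset.mem_Ico] at hj
  rcases Nat.lt_or_ge j 2 with h1 | h1
  · -- j = 1
    have hj1 : j = 1 := by omega
    subst hj1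
    rw [Nat.choose_one_right]
    exact ⟨a * b ^ (p - 1), by ring⟩
  · -- j ≥ 2
    obtain ⟨m, hm⟩ : ∃ m, j = m + 2 := ⟨j - 2, by omega⟩
    subst hm
    exact ⟨(p : A) ^ m * a ^ (m + 2) * b ^ (p - (m + 2)) * (p.choose (m + 2) : A),
      by rw [mul_pow]; ring⟩

lemma isUnit_add_of_mem_jacobson {v j : A} (hv : IsUnit v)
    (hj : j ∈ Ideal.jacobson (⊥ : Ideal A)) : IsUnit (v + j) := by
  obtain ⟨u, rfl⟩ := hv
  have h1 : IsUnit (j * ↑u⁻¹ + 1) := (Ideal.mem_jacobson_bot.mp hj) _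
  have h2 : (↑u + j : A) = ↑u * (j * ↑u⁻¹ + 1) := by
    rw [mul_add, mul_one, ← mul_assoc]
    rw [mul_comm (u : A) j, mul_assoc, Units.mul_inv, mul_one, add_comm]
  rw [h2]
  exact u.isUnit.mul h1

end Aux

theorem statement5 (p : ℕ) (hp : p.Prime) {A : Type*} [CommRing A]
    (D : DeltaRing p A) (d : A) (hd : IsUnit (D.δ d))
    (hjac : Ideal.span {(p : A), d} ≤ Ideal.jacobson (⊥ : Ideal A)) :
    ∀ r : ℕ, 1 ≤ r → ∃ u : Aˣ,
      D.phi^[r] d - (p : A) * u ∈ Ideal.span {∏ s ∈ Finset.range r, D.phi^[s] d} := by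
  have hp2 := hp.two_le
  obtain ⟨k, hk⟩ : ∃ k, p = k + 2 := ⟨p - 2, by omega⟩
  have hpJ : (p : A) ∈ Ideal.jacobson (⊥ : Ideal A) :=
    hjac (Ideal.subset_span (Set.mem_insert _ _))
  have hdJ : d ∈ Ideal.jacobson (⊥ : Ideal A) :=
    hjac (Ideal.subset_span (Set.mem_insert_of_mem _ rfl))
  set Φ : A →+* A := phiHom hp D with hΦ
  have hΦc : ∀ n (x : A), D.phi^[n] x = (Φ ^ n) x := by
    intro n x
    rw [RingHom.coe_pow, ← coe_phiHom hp D]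
  -- the key inductive claim
  have main : ∀ r : ℕ, 1 ≤ r → ∃ u : Aˣ, ∃ c : A,
      D.phi^[r] d = (p : A) * u + c * ∏ s ∈ Finset.range r, D.phi^[s] d := by
    intro r hr
    induction r, hr using Nat.le_induction with
    | base =>
      refine ⟨hd.unit, d ^ (p - 1), ?_⟩
      simp only [Function.iterate_one, Function.iterate_zero, id_eq, Finset.prod_range_one]
      rw [DeltaRing.phi, IsUnit.unit_spec]
      rw [← pow_succ]
      have : p - 1 + 1 = p := by omega
      rw [this]; ring
    | succ r hr ih =>
      obtain ⟨u, c, hrc⟩ := ih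
      set Pi : A := ∏ s ∈ Finset.range r, D.phi^[s] d with hPi
      -- Pi is in the Jacobson radical (it is a multiple of d)
      have hPiJ : Pi ∈ Ideal.jacobson (⊥ : Ideal A) := by
        have : Pi = (∏ s ∈ Finset.Ico 1 r, D.phi^[s] d) * d := by
          rw [hPi, Finset.range_eq_Ico, Finset.prod_eq_prod_Ico_succ_bot (by omega)]
          simp [mul_comm]
        rw [this]
        exact (Ideal.jacobson ⊥).mul_mem_left _ hdJ
      -- φ^[r+1] d = (φ^[r] d)^p + p * φ^[r] (δ d)
      have hstep : D.phi^[r + 1] d = (D.phi^[r] d) ^ p + (p : A) * (Φ ^ r) (D.δ d) := by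
        rw [Function.iterate_succ_apply]
        have : D.phi d = d ^ p + (p : A) * D.δ d := rfl
        rw [this, hΦc, map_add, map_mul, map_pow, map_natCast, ← hΦc]
      -- expand (p*u + c*Pi)^p modulo p^2
      obtain ⟨F, hF⟩ := p_sq_dvd hp (↑u) (c * Pi) (A := A)
      have hexp : (D.phi^[r] d) ^ p = (c * Pi) ^ p + (p : A) ^ 2 * F := by
        rw [hrc]; linear_combination hF
    -- rewrite (c*Pi)^p
      have hcp : (c * Pi) ^ p
          = (c ^ (k + 1) * Pi ^ k) * (Pi * D.phi^[r] d) - (p : A) * (↑u * c ^ (k + 1) * Pi ^ (k + 1)) := by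
        have h1 : c * Pi = D.phi^[r] d - (p : A) * ↑u := by rw [hrc]; ring
        calc (c * Pi) ^ p = (c ^ (k + 1) * Pi ^ (k + 1)) * (c * Pi) := by
              rw [hk]; ring
          _ = (c ^ (k + 1) * Pi ^ (k + 1)) * (D.phi^[r] d - (p : A) * ↑u) := by
              rw [h1]
          _ = _ := by ring
      have hPow : Pi ^ (k + 1) ∈ Ideal.jacobson (⊥ : Ideal A) := by
        rw [pow_succ]
        exact Ideal.mul_mem_left _ _ hPiJ
      have hjJ : (p : A) * F - ↑u * c ^ (k + 1) * Pi ^ (k + 1)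
          ∈ Ideal.jacobson (⊥ : Ideal A) := by
        apply sub_mem
        · exact Ideal.mul_mem_right _ _ hpJ
        · exact Ideal.mul_mem_left _ _ hPow
      have hzu : IsUnit ((Φ ^ r) (D.δ d)) := hd.map (Φ ^ r)
      have hunit : IsUnit ((Φ ^ r) (D.δ d)
          + ((p : A) * F - ↑u * c ^ (k + 1) * Pi ^ (k + 1))) :=
        isUnit_add_of_mem_jacobson hzu hjJ
      refine ⟨hunit.unit, c ^ (k + 1) * Pi ^ k, ?_⟩
      rw [IsUnit.unit_spec]
      rw [Finset.prod_range_succ, ← hPi, hstep, hexp, hcp]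
      ring
  intro r hr
  obtain ⟨u, c, hrc⟩ := main r hr
  refine ⟨u, ?_⟩
  rw [hrc]
  have : (p : A) * ↑u + c * (∏ s ∈ Finset.range r, D.phi^[s] d) - (p : A) * ↑u
      = c * ∏ s ∈ Finset.range r, D.phi^[s] d := by ring
  rw [this]
  exact Ideal.mem_span_singleton.mpr ⟨c, mul_comm _ _⟩
end

section
/- Let B be a commutative ring and J ⊆ B an ideal such that B is J-adically complete and separated, and let φ : B → B be a ring homomorphism with φ(J) ⊆ J². Then every element of 1 + J is a unit of B, for every u ∈ 1 + J the element u·φ(u)^{−1} again lies in 1 + J, and the map 1 + J → 1 + J sending u to u·φ(u)^{−1} is a bijection. -/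
private def s6seq {B : Type*} [CommRing B] (φ : B →+* B) (y : B) : ℕ → B
  | 0 => y
  | (n+1) => y + φ (s6seq φ y n) + y * φ (s6seq φ y n)

theorem statement6 {B : Type*} [CommRing B] (J : Ideal B)
    (hcomplete : IsAdicComplete J B)
    (φ : B →+* B) (hφ : ∀ a ∈ J, φ a ∈ J ^ 2) :
    (∀ x ∈ J, IsUnit (1 + x)) ∧
    (∀ x ∈ J, ∃ y ∈ J, (1 + x) = (1 + y) * φ (1 + x)) ∧
    (∀ y ∈ J, ∃! x, x ∈ J ∧ (1 + x) = (1 + y) * φ (1 + x)) := by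
  -- φ maps J^k into J^(2k)
  have hmapJ : Ideal.map φ J ≤ J ^ 2 := Ideal.map_le_iff_le_comap.mpr hφ
  have hφk : ∀ (k : ℕ) (a : B), a ∈ J ^ k → φ a ∈ J ^ (2 * k) := by
    intro k a ha
    have h1 : Ideal.map φ (J ^ k) ≤ J ^ (2 * k) := by
      rw [Ideal.map_pow]
      calc (Ideal.map φ J) ^ k ≤ (J ^ 2) ^ k := Ideal.pow_right_mono hmapJ k
      _ = J ^ (2 * k) := by rw [← pow_mul, mul_comm]
    exact h1 (Ideal.mem_map_of_mem φ ha)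
  have hφk' : ∀ (k : ℕ) (a : B), a ∈ J ^ (k + 1) → φ a ∈ J ^ (k + 2) := by
    intro k a ha
    have := hφk (k + 1) a ha
    exact Ideal.pow_le_pow_right (by omega) this
  have hST : ∀ n : ℕ, (J ^ n • ⊤ : Submodule B B) = J ^ n := by
    intro n; rw [smul_eq_mul, Ideal.mul_top]
  -- Part 1
  have part1 : ∀ x ∈ J, IsUnit (1 + x) := by
    intro x hx
    have hx' : x ∈ Ideal.jacobson (⊥ : Ideal B) := IsAdicComplete.le_jacobson_bot J hx
    have := Ideal.mem_jacobson_bot.mp hx' 1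
    simpa [add_comm] using this
  refine ⟨part1, ?_, ?_⟩
  · -- Part 2
    intro x hx
    have hφx : φ x ∈ J := Ideal.pow_le_self (by norm_num) (hφ x hx)
    have hu : IsUnit (φ (1 + x)) := by
      rw [map_add, map_one]; exact part1 _ hφx
    obtain ⟨u, hu⟩ := hu
    refine ⟨(1 + x) * ↑u⁻¹ - 1, ?_, ?_⟩
    · have h2 : (1 + φ x) * (↑u⁻¹ : B) = 1 := by
        rw [show (1 : B) + φ x = φ (1 + x) by simp, ← hu]; exact u.mul_inv
      have heq : (1 + x) * ↑u⁻¹ - 1 = (x - φ x) * (↑u⁻¹ : B) := by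
        linear_combination h2
      rw [heq]
      exact J.mul_mem_right _ (J.sub_mem hx hφx)
    · rw [← hu]
      linear_combination -(1 + x) * u.inv_mul
  · -- Part 3
    intro y hy
    -- uniqueness helper
    have huniq : ∀ x x' : B, x ∈ J → x' ∈ J →
        (1 + x) = (1 + y) * φ (1 + x) → (1 + x') = (1 + y) * φ (1 + x') → x = x' := by
      intro x x' hx hx' he he'
      simp only [map_add, map_one] at he he'
      have key : x - x' = (1 + y) * φ (x - x') := by
        rw [map_sub]
        linear_combination he - he'
      have hall : ∀ n : ℕ, x - x' ∈ J ^ (n + 1) := by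
        intro n
        induction n with
        | zero => simpa using J.sub_mem hx hx'
        | succ k ih =>
          rw [key]
          exact Ideal.mul_mem_left _ _ (hφk' k _ ih)
      have : x - x' = 0 := by
        apply hcomplete.toIsHausdorff.haus
        intro n
        rw [SModEq.zero, hST]
        cases n with
        | zero => simp
        | succ k => exact hall k
      exact sub_eq_zero.mp this
    -- existence via the adic limit of s6seq
    have hseqJ : ∀ n, s6seq φ y n ∈ J := by
      intro n
      induction n with
      | zero => exact hy
      | succ k ih =>
        have hφs : φ (s6seq φ y k) ∈ J := Ideal.pow_le_self (by norm_num) (hφ _ ih)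
        exact J.add_mem (J.add_mem hy hφs) (J.mul_mem_left y hφs)
    have hdiff : ∀ n, s6seq φ y (n + 1) - s6seq φ y n ∈ J ^ (n + 2) := by
      intro n
      induction n with
      | zero =>
        have h2 : φ y ∈ J ^ 2 := hφ y hy
        show y + φ y + y * φ y - y ∈ J ^ 2
        have : y + φ y + y * φ y - y = (1 + y) * φ y := by ring
        rw [this]
        exact Ideal.mul_mem_left _ _ h2
      | succ k ih =>
        have : s6seq φ y (k + 2) - s6seq φ y (k + 1)
            = (1 + y) * φ (s6seq φ y (k + 1) - s6seq φ y k) := by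
          show y + φ (s6seq φ y (k+1)) + y * φ (s6seq φ y (k+1))
              - (y + φ (s6seq φ y k) + y * φ (s6seq φ y k)) = _
          rw [map_sub]; ring
        rw [this]
        exact Ideal.mul_mem_left _ _ (hφk' (k + 1) _ ih)
    have hcauchy : ∀ {m n : ℕ}, m ≤ n →
        s6seq φ y m ≡ s6seq φ y n [SMOD (J ^ m • ⊤ : Submodule B B)] := by
      intro m n hmn
      rw [SModEq.sub_mem, hST]
      induction n with
      | zero => have : m = 0 := Nat.le_zero.mp hmn; subst this; simp
      | succ k ih =>
        rcases Nat.lt_or_ge m (k + 1) with h | h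
        · have hk : m ≤ k := Nat.lt_succ_iff.mp h
          have h1 := ih hk
          have h2 : s6seq φ y k - s6seq φ y (k + 1) ∈ J ^ m := by
            have hle : J ^ (k + 2) ≤ J ^ m := Ideal.pow_le_pow_right (by omega)
            have := (J ^ m).neg_mem (hle (hdiff k))
            simpa [neg_sub] using this
          simpa using (J ^ m).add_mem h1 h2
        · have : m = k + 1 := le_antisymm hmn h
          subst this; simp
    obtain ⟨L, hL⟩ := hcomplete.toIsPrecomplete.prec hcauchy
    have hLmem : ∀ n, s6seq φ y n - L ∈ J ^ n := by
      intro n; have := hL n; rwa [SModEq.sub_mem, hST] at this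
    have hLJ : L ∈ J := by
      have h1 := hLmem 1
      simp only [pow_one] at h1
      have := J.sub_mem (hseqJ 1) h1
      simpa using this
    have hfix : L = y + φ L + y * φ L := by
      have : ∀ n : ℕ, L - (y + φ L + y * φ L) ∈ J ^ n := by
        intro n
        have e1 : s6seq φ y (n + 1) - L ∈ J ^ n :=
          Ideal.pow_le_pow_right (by omega) (hLmem (n + 1))
        have e2 : φ (s6seq φ y n - L) ∈ J ^ n := by
          have := hφk n _ (hLmem n)
          exact Ideal.pow_le_pow_right (by omega) this
        have e3 : (1 + y) * φ (s6seq φ y n - L) ∈ J ^ n := Ideal.mul_mem_left _ _ e2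
        have key : L - (y + φ L + y * φ L)
            = -(s6seq φ y (n + 1) - L) + (1 + y) * φ (s6seq φ y n - L) := by
          show L - (y + φ L + y * φ L)
              = -(y + φ (s6seq φ y n) + y * φ (s6seq φ y n) - L) + _
          rw [map_sub]; ring
        rw [key]
        exact (J ^ n).add_mem ((J ^ n).neg_mem e1) e3
      have h0 := hcomplete.toIsHausdorff.haus (L - (y + φ L + y * φ L))
        (fun n => by rw [SModEq.zero, hST]; exact this n)
      exact sub_eq_zero.mp h0
    refine ⟨L, ⟨hLJ, ?_⟩, ?_⟩
    · rw [map_add, map_one]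
      linear_combination hfix
    · rintro x ⟨hxJ, hxe⟩
      exact huniq x L hxJ hLJ hxe (by rw [map_add, map_one]; linear_combination hfix)
end

section
/- Let B be a commutative ring and J ⊆ B an ideal such that B is J-adically complete and separated, and let φ : B → B be a ring homomorphism with φ(J) ⊆ J². Then for every u ∈ 1 + J there exists a unique v ∈ 1 + J with v = u·φ(v); moreover this v satisfies, for every N ≥ 0, that v − ∏_{r=0}^{N−1} φ^r(u) lies in J^{2^N} (where φ^r denotes the r-fold iterate of φ and the empty product is 1). In other words, v is the limit of the partial products ∏_{r=0}^{N−1} φ^r(u) in the J-adic topology. -/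
theorem statement7 {B : Type*} [CommRing B] (J : Ideal B)
    (hcomplete : IsAdicComplete J B)
    (φ : B →+* B) (hφ : ∀ a ∈ J, φ a ∈ J ^ 2) (x : B) (hx : x ∈ J) :
    (∃! v : B, (∃ y ∈ J, v = 1 + y) ∧ v = (1 + x) * φ v) ∧
    ∀ v : B, ((∃ y ∈ J, v = 1 + y) ∧ v = (1 + x) * φ v) →
      ∀ N : ℕ, v - ∏ r ∈ Finset.range N, (⇑φ)^[r] (1 + x) ∈ J ^ (2 ^ N) := by
  classical
  -- φ maps J^k into J^(2k)
  have hmap : ∀ k : ℕ, ∀ a ∈ (J ^ k : Ideal B), φ a ∈ J ^ (2 * k) := by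
    intro k a ha
    have hmJ : Ideal.map φ J ≤ J ^ 2 :=
      Ideal.map_le_iff_le_comap.mpr fun a ha => hφ a ha
    have h1 : Ideal.map φ (J ^ k) ≤ (J ^ 2) ^ k := by
      rw [Ideal.map_pow]
      exact Ideal.pow_right_mono hmJ k
    have h2 := h1 (Ideal.mem_map_of_mem φ ha)
    rwa [pow_mul]
  set u : B := 1 + x with hu
  -- iterates
  have hiter : ∀ r : ℕ, (⇑φ)^[r] x ∈ J ^ (2 ^ r) := by
    intro r
    induction r with
    | zero => simpa using hx
    | succ r ih =>
        rw [Function.iterate_succ_apply']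
        have := hmap (2 ^ r) _ ih
        rwa [← pow_succ'] at this
  have hiterhom : ∀ r : ℕ, (⇑φ)^[r] u = 1 + (⇑φ)^[r] x := by
    intro r
    have : (⇑φ)^[r] = ⇑(φ ^ r) := (RingHom.coe_pow φ r).symm
    rw [this, hu, map_add, map_one]
  set P : ℕ → B := fun N => ∏ r ∈ Finset.range N, (⇑φ)^[r] u with hP
  have hstep : ∀ N : ℕ, P (N + 1) - P N ∈ J ^ (2 ^ N) := by
    intro N
    have : P (N + 1) = P N * ((⇑φ)^[N] u) := Finset.prod_range_succ _ _
    rw [this, hiterhom N]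
    have : P N * (1 + (⇑φ)^[N] x) - P N = P N * (⇑φ)^[N] x := by ring
    rw [this]
    exact Ideal.mul_mem_left _ _ (hiter N)
  have hchain : ∀ m n : ℕ, m ≤ n → P n - P m ∈ J ^ (2 ^ m) := by
    intro m n hmn
    induction n, hmn using Nat.le_induction with
    | base => simpa using (J ^ (2 ^ m)).zero_mem
    | succ n hmn ih =>
        have h1 : P (n + 1) - P m = (P (n + 1) - P n) + (P n - P m) := by ring
        rw [h1]
        exact add_mem (Ideal.pow_le_pow_right (Nat.pow_le_pow_right (by norm_num) hmn) (hstep n)) ih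
  -- completeness gives a limit
  obtain ⟨L, hL⟩ := hcomplete.toIsPrecomplete.prec (f := P) (by
    intro m n hmn
    rw [SModEq.sub_mem]
    have : (J ^ m • ⊤ : Submodule B B) = J ^ m := by
      rw [smul_eq_mul, Ideal.mul_top]
    rw [this]
    have := hchain m n hmn
    have h2 : P m - P n = -(P n - P m) := by ring
    rw [h2]
    exact neg_mem (Ideal.pow_le_pow_right (Nat.le_of_lt (Nat.lt_two_pow_self (n := m))) this))
  have hLmem : ∀ n : ℕ, P n - L ∈ J ^ n := by
    intro n
    have := hL n
    rw [SModEq.sub_mem] at this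
    rwa [smul_eq_mul, Ideal.mul_top] at this
  have hclose : ∀ N : ℕ, L - P N ∈ J ^ (2 ^ N) := by
    intro N
    have h1 : L - P (2 ^ N) ∈ J ^ (2 ^ N) := by
      have := hLmem (2 ^ N)
      have h2 : L - P (2 ^ N) = -(P (2 ^ N) - L) := by ring
      rw [h2]; exact neg_mem this
    have h2 : P (2 ^ N) - P N ∈ J ^ (2 ^ N) :=
      hchain N (2 ^ N) (Nat.le_of_lt (Nat.lt_two_pow_self (n := N)))
    have h3 : L - P N = (L - P (2 ^ N)) + (P (2 ^ N) - P N) := by ring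
    rw [h3]; exact add_mem h1 h2
  have hP1 : P 1 = u := by simp [hP]
  have hLy : L - 1 ∈ J := by
    have h1 : L - P 1 ∈ J := by
      have h0 := hclose 1
      have h2 : J ^ (2 ^ 1) ≤ J ^ 1 := Ideal.pow_le_pow_right (by norm_num)
      simpa using h2 h0
    have h2 : L - 1 = (L - P 1) + x := by rw [hP1, hu]; ring
    rw [h2]; exact add_mem h1 hx
  -- the fixed point equation
  have hφP : ∀ N : ℕ, u * φ (P N) = P (N + 1) := by
    intro N
    have h1 : φ (P N) = ∏ r ∈ Finset.range N, (⇑φ)^[r + 1] u := by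
      rw [hP, map_prod]
      exact Finset.prod_congr rfl fun r _ => (Function.iterate_succ_apply' φ r u).symm
    have h2 : P (N + 1) = (∏ r ∈ Finset.range N, (⇑φ)^[r + 1] u) * (⇑φ)^[0] u :=
      Finset.prod_range_succ' _ _
    rw [h1, h2]
    simp [mul_comm]
  have hfix : L = u * φ L := by
    have key : ∀ n : ℕ, L - u * φ L ∈ J ^ n := by
      intro n
      have hd : L - u * φ L = (L - P (n + 1)) - u * (φ L - φ (P n)) := by
        rw [mul_sub, hφP n]; ring
      rw [hd]
      have h1 : L - P (n + 1) ∈ J ^ (2 ^ (n + 1)) := hclose (n + 1)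
      have h2 : φ L - φ (P n) ∈ J ^ (2 ^ (n + 1)) := by
        have := hmap (2 ^ n) _ (hclose n)
        rw [← pow_succ'] at this
        rw [← map_sub]
        exact this
      have h5 : (2 : ℕ) ^ (n + 1) ≥ n := le_of_lt (lt_of_lt_of_le (Nat.lt_two_pow_self (n := n))
        (Nat.pow_le_pow_right (by norm_num) (Nat.le_succ n)))
      exact sub_mem (Ideal.pow_le_pow_right h5 h1)
        (Ideal.pow_le_pow_right h5 (Ideal.mul_mem_left _ _ h2))
    have := hcomplete.toIsHausdorff.haus (L - u * φ L) (by
      intro n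
      rw [SModEq.sub_mem, sub_zero, smul_eq_mul, Ideal.mul_top]
      exact key n)
    exact sub_eq_zero.mp this
  -- uniqueness
  have huniq : ∀ w : B, ((∃ y ∈ J, w = 1 + y) ∧ w = (1 + x) * φ w) → w = L := by
    rintro w ⟨⟨y, hy, hwy⟩, hw⟩
    have he0 : w - L ∈ J := by
      have : w - L = y - (L - 1) := by rw [hwy]; ring
      rw [this]; exact sub_mem hy hLy
    have heq : w - L = u * φ (w - L) := by
      rw [map_sub, mul_sub, ← hw, ← hfix]
    have hpow : ∀ n : ℕ, w - L ∈ J ^ (2 ^ n) := by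
      intro n
      induction n with
      | zero => simpa using he0
      | succ n ih =>
          rw [heq]
          have := hmap (2 ^ n) _ ih
          rw [← pow_succ'] at this
          exact Ideal.mul_mem_left _ _ this
    have hall : ∀ n : ℕ, w - L ∈ J ^ n := fun n =>
      Ideal.pow_le_pow_right (Nat.le_of_lt (Nat.lt_two_pow_self (n := n))) (hpow n)
    have := hcomplete.toIsHausdorff.haus (w - L) (by
      intro n
      rw [SModEq.sub_mem, sub_zero, smul_eq_mul, Ideal.mul_top]
      exact hall n)
    exact sub_eq_zero.mp this
  refine ⟨⟨L, ⟨⟨L - 1, hLy, by ring⟩, hfix⟩, huniq⟩, ?_⟩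
  intro v hv N
  rw [huniq v hv]
  exact hclose N
end

section
/- Let p be a prime and let e, n, i be positive integers. Set j = ⌈n/e⌉ and [j]_p = (p^j − 1)/(p − 1). Assume that, in ℚ, (i − 1) ≥ (p/(p−1))·(p·[j]_p − p^j·j + p^j·(n/e)). Let c = ⌈(i−1)·n/p⌉ (ceiling of the rational (i−1)n/p). Then, in ℚ, e·((i − 1) − ⌊(c − 1)/n⌋) ≥ p·[j]_p·e − p^j·(j·e − n), where ⌊(c−1)/n⌋ denotes the floor of the rational (c−1)/n. -/
theorem statement11 (p e n i : ℕ) (hp : p.Prime)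
    (he : 0 < e) (hn : 0 < n) (hi : 0 < i)
    (j : ℤ) (hj : j = ⌈(n : ℚ) / e⌉)
    (hyp : ((i : ℚ) - 1) ≥ ((p : ℚ) / ((p : ℚ) - 1)) *
      ((p : ℚ) * (((p : ℚ) ^ j - 1) / ((p : ℚ) - 1)) - (p : ℚ) ^ j * (j : ℚ) +
        (p : ℚ) ^ j * ((n : ℚ) / e)))
    (c : ℤ) (hc : c = ⌈(((i : ℚ) - 1) * n) / p⌉) :
    (e : ℚ) * (((i : ℚ) - 1) - (⌊((c : ℚ) - 1) / n⌋ : ℚ)) ≥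
      (p : ℚ) * (((p : ℚ) ^ j - 1) / ((p : ℚ) - 1)) * e -
        (p : ℚ) ^ j * ((j : ℚ) * e - n) := by
  have hp2 : (2:ℚ) ≤ (p:ℚ) := by exact_mod_cast hp.two_le
  have hp0 : (0:ℚ) < p := by linarith
  have hp1 : (0:ℚ) < (p:ℚ) - 1 := by linarith
  have hn0 : (0:ℚ) < n := by exact_mod_cast hn
  have he0 : (0:ℚ) < e := by exact_mod_cast he
  set P : ℚ := (p:ℚ) ^ j with hP
  set x : ℚ := (i:ℚ) - 1 with hx
  set D : ℚ := (P - 1) / ((p:ℚ) - 1) with hD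
  set F : ℚ := (⌊((c : ℚ) - 1) / n⌋ : ℚ) with hF
  -- ceiling bound : c < x*n/p + 1
  have h1 : (c:ℚ) < x * n / p + 1 := by
    rw [hc]
    exact_mod_cast Int.ceil_lt_add_one _
  -- floor bound
  have h2 : F ≤ ((c:ℚ) - 1) / n := Int.floor_le _
  have h3 : ((c:ℚ) - 1) / n < x / p := by
    rw [div_lt_div_iff₀ hn0 hp0]
    have hc1 : (c:ℚ) - 1 < x * n / p := by linarith
    calc ((c:ℚ) - 1) * p < (x * n / p) * p := by nlinarith
      _ = x * n := by field_simp
  have h4 : F * p ≤ x := by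
    have := lt_of_le_of_lt h2 h3
    rw [lt_div_iff₀ hp0] at this
    linarith
  -- hypothesis rearranged
  have h5 : x * ((p:ℚ) - 1) ≥ (p:ℚ) * ((p:ℚ) * D - P * j + P * (n / e)) := by
    have h := mul_le_mul_of_nonneg_right hyp hp1.le
    have hq : (p:ℚ) / ((p:ℚ) - 1) * ((p:ℚ) - 1) = p := div_mul_cancel₀ _ hp1.ne'
    calc (p:ℚ) * ((p:ℚ) * D - P * j + P * (n / e))
        = ((p:ℚ) / ((p:ℚ) - 1)) * ((p:ℚ) * D - P * j + P * (n / e)) * ((p:ℚ) - 1) := by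
          linear_combination ((p:ℚ) * D - P * j + P * (n / e)) * hq.symm
      _ ≤ x * ((p:ℚ) - 1) := h
  have h6 : x * ((p:ℚ) - 1) * e ≥ (p:ℚ) * ((p:ℚ) * D * e - P * j * e + P * n) := by
    have h := mul_le_mul_of_nonneg_right h5 he0.le
    have hne : ((n:ℚ) / e) * e = n := div_mul_cancel₀ _ he0.ne'
    have heq : (p:ℚ) * ((p:ℚ) * D - P * j + P * (n / e)) * e
        = (p:ℚ) * ((p:ℚ) * D * e - P * j * e + P * n) := by
      linear_combination (p:ℚ) * P * hne
    linarith [heq ▸ h]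
  -- combine
  have h7 : (p:ℚ) * ((e:ℚ) * (x - F)) ≥ (p:ℚ) * ((p:ℚ) * D * e - P * j * e + P * n) := by
    nlinarith [mul_le_mul_of_nonneg_left h4 he0.le]
  have h8 : (e:ℚ) * (x - F) ≥ (p:ℚ) * D * e - P * j * e + P * n :=
    le_of_mul_le_mul_left h7 hp0
  show (e:ℚ) * (x - F) ≥ (p:ℚ) * D * e - P * ((j:ℚ) * e - n)
  linarith
end

section
/- Let R be a commutative ring and p a prime. In the polynomial ring R[x₀, x₁, x₂, …] on countably many variables, the elements x_u^p + p·x_{u+1} (for u ≥ 0) form a regular sequence; that is, for every N ≥ 0 the element x_N^p + p·x_{N+1} is a nonzerodivisor in the quotient of R[x₀, x₁, …] by the ideal generated by x_u^p + p·x_{u+1} for 0 ≤ u < N. Moreover, the quotient ring R[x₀, x₁, …] / (x_u^p + p·x_{u+1} : u ≥ 0) is a free R-module with basis the images of the monomials ∏_u x_u^{e_u} where 0 ≤ e_u ≤ p − 1 for all u and all but finitely many e_u are zero. -/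
/-!
Modulo `x_u ^ p + p * x_(u+1)` one may "carry" an exponent `≥ p` at an index `u ∈ U` to the index
`u + 1`, at the cost of a factor `-p`; since `p ≥ 2` this lowers the total degree, so the monomials
whose exponents are `< p` on `U` span the quotient. Carrying always at the least offending index
defines an `R`-linear normal form on `R[x₀, x₁, …]`; a confluence check shows that it kills every
multiple of `x_u ^ p + p * x_(u+1)` with `u ∈ U`, and it fixes the reduced monomials, which are
therefore independent. If `N, N + 1 ∉ U`, multiplication by `x_N ^ p + p * x_(N+1)` sends a reduced
monomial to a sum of two reduced monomials, only one of which has its `x_N`-exponent raised by `p`;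
looking at the largest `x_N`-exponent occurring shows that it is injective.
-/

open MvPolynomial Finsupp Function

namespace Finsupp

theorem eq_zero_of_mapDomain_add_smul_mapDomain_eq_zero {ι κ R : Type*} [Semiring R]
    {σ τ : ι → κ} (hσ : Injective σ) (hτ : Injective τ) (h : ι → ℕ)
    (hστ : ∀ a b, σ a = τ b → h a < h b) {c : ι →₀ R} (r : R)
    (hc : c.mapDomain σ + r • c.mapDomain τ = 0) : c = 0 := by
  by_contra hne
  obtain ⟨a, ha, hmax⟩ := Finset.exists_max_image c.support h (support_nonempty_iff.2 hne)
  have hτa : c.mapDomain τ (σ a) = 0 := by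
    by_cases hmem : σ a ∈ Set.range τ
    · obtain ⟨b, hb⟩ := hmem
      rw [← hb, mapDomain_apply hτ, ← notMem_support_iff]
      exact fun hb' => (hmax b hb').not_gt (hστ a b hb.symm)
    · exact mapDomain_of_notMem_range _ _ hmem
  have hσa := DFunLike.congr_fun hc (σ a)
  rw [add_apply, smul_apply, hτa, smul_zero, add_zero, mapDomain_apply hσ, zero_apply] at hσa
  exact mem_support_iff.1 ha hσa

end Finsupp

namespace CarryQuotient

variable (R : Type*) [CommRing R] (p : ℕ)

noncomputable def carryPoly (u : ℕ) : MvPolynomial ℕ R :=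
  X u ^ p + (p : MvPolynomial ℕ R) * X (u + 1)

noncomputable def carryIdeal (U : Set ℕ) : Ideal (MvPolynomial ℕ R) :=
  Ideal.span (carryPoly R p '' U)

abbrev Reduced (U : Set ℕ) : Type := {e : ℕ →₀ ℕ // ∀ u ∈ U, e u < p}

noncomputable def carry (e : ℕ →₀ ℕ) (u : ℕ) : ℕ →₀ ℕ :=
  e - single u p + single (u + 1) 1

variable {R p}

theorem sub_single_add_single {e : ℕ →₀ ℕ} {u : ℕ} (h : p ≤ e u) :
    e - single u p + single u p = e :=
  tsub_add_cancel_of_le (single_le_iff.2 h)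

theorem carry_add {e : ℕ →₀ ℕ} {v : ℕ} (h : p ≤ e v) (f : ℕ →₀ ℕ) :
    carry p (e + f) v = carry p e v + f := by
  rw [carry, carry, ← tsub_add_eq_add_tsub (single_le_iff.2 h), add_right_comm]

theorem degree_carry_lt (hp : 2 ≤ p) {e : ℕ →₀ ℕ} {u : ℕ} (h : p ≤ e u) :
    (carry p e u).degree < e.degree := by
  have he := congrArg degree (sub_single_add_single h)
  rw [map_add, degree_single] at he
  rw [carry, map_add, degree_single]
  omega

variable (R) in
open Classical in
/-- The normal form of the monomial `x ^ e`, reducing at the least index that violates `U`;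
`normalForm_add_single_pow` shows that this choice does not matter. -/
noncomputable def normalForm (hp : 2 ≤ p) (U : Set ℕ) (e : ℕ →₀ ℕ) : Reduced p U →₀ R :=
  if h : ∃ u ∈ U, p ≤ e u then -(p : R) • normalForm hp U (carry p e (Nat.find h))
  else single ⟨e, fun u hu => not_le.1 fun hle => h ⟨u, hu, hle⟩⟩ 1
termination_by e.degree
decreasing_by exact degree_carry_lt hp (Nat.find_spec h).2

variable {hp : 2 ≤ p} {U : Set ℕ}

theorem normalForm_of_reduced {e : ℕ →₀ ℕ} (h : ∀ u ∈ U, e u < p) :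
    normalForm R hp U e = single ⟨e, h⟩ 1 := by
  rw [normalForm, dif_neg (by simpa using h)]

open Classical in
theorem normalForm_of_isLeast {e : ℕ →₀ ℕ} {v : ℕ} (h : IsLeast {u | u ∈ U ∧ p ≤ e u} v) :
    normalForm R hp U e = -(p : R) • normalForm R hp U (carry p e v) := by
  have hv : ∃ u ∈ U, p ≤ e u := ⟨v, h.1⟩
  rw [normalForm, dif_pos hv, (Nat.isLeast_find hv).unique h]

theorem exists_isLeast_violation {e : ℕ →₀ ℕ} (h : ∃ u ∈ U, p ≤ e u) :
    ∃ v, IsLeast {u | u ∈ U ∧ p ≤ e u} v := by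
  classical
  exact ⟨_, Nat.isLeast_find h⟩

theorem normalForm_add_single_pow (e : ℕ →₀ ℕ) {u : ℕ} (hu : u ∈ U) :
    normalForm R hp U (e + single u p) = -(p : R) • normalForm R hp U (e + single (u + 1) 1) := by
  induction hn : e.degree using Nat.strong_induction_on generalizing e with
  | _ n ih =>
  obtain ⟨v, hv⟩ := exists_isLeast_violation (⟨u, hu, by simp⟩ : ∃ w ∈ U, p ≤ (e + single u p) w)
  rw [normalForm_of_isLeast hv]
  by_cases hev : p ≤ e v
  · -- `v` is also the least violation of `e + single (u + 1) 1`, and carrying at `v` commutes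
    -- with adding `single u p` or `single (u + 1) 1`
    have hv' : IsLeast {w | w ∈ U ∧ p ≤ (e + single (u + 1) (1 : ℕ)) w} v := by
      refine ⟨⟨hv.1.1, hev.trans (by simp)⟩, fun w ⟨hw, hpw⟩ => ?_⟩
      rcases eq_or_ne w (u + 1) with rfl | hne
      · exact (hv.2 ⟨hu, by simp⟩).trans (Nat.le_succ u)
      · refine hv.2 ⟨hw, le_trans ?_ (by simp : e w ≤ (e + single u p) w)⟩
        simpa [single_eq_of_ne hne] using hpw
    have hlt : (carry p e v).degree < n := hn ▸ degree_carry_lt hp hev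
    rw [normalForm_of_isLeast hv', carry_add hev, carry_add hev, ih _ hlt _ rfl]
  · have hvu : v = u := by
      by_contra hne
      exact hev (by simpa [single_eq_of_ne hne] using hv.1.2)
    rw [hvu, carry, add_tsub_cancel_right]

variable (R hp U) in
noncomputable def normalFormₗ : MvPolynomial ℕ R →ₗ[R] (Reduced p U →₀ R) :=
  (basisMonomials ℕ R).constr R (normalForm R hp U)

theorem normalFormₗ_monomial (e : ℕ →₀ ℕ) (c : R) :
    normalFormₗ R hp U (monomial e c) = c • normalForm R hp U e := by
  have h := (basisMonomials ℕ R).constr_basis R (normalForm R hp U) e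
  simp only [coe_basisMonomials] at h
  rw [← mul_one c, ← smul_eq_mul, ← smul_monomial, map_smul, smul_eq_mul, mul_one,
    normalFormₗ, h]

theorem monomial_mul_carryPoly (e : ℕ →₀ ℕ) (c : R) (u : ℕ) :
    monomial e c * carryPoly R p u
      = monomial (e + single u p) c + p • monomial (e + single (u + 1) 1) c := by
  rw [carryPoly, mul_add, X_pow_eq_monomial, monomial_mul, mul_one, nsmul_eq_mul, mul_left_comm,
    X, monomial_mul, mul_one]

theorem normalFormₗ_mul_carryPoly (q : MvPolynomial ℕ R) {u : ℕ} (hu : u ∈ U) :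
    normalFormₗ R hp U (q * carryPoly R p u) = 0 := by
  induction q using MvPolynomial.induction_on' with
  | add q₁ q₂ h₁ h₂ => rw [add_mul, map_add, h₁, h₂, add_zero]
  | monomial e c =>
    rw [monomial_mul_carryPoly, map_add, map_nsmul, normalFormₗ_monomial, normalFormₗ_monomial,
      normalForm_add_single_pow e hu, ← Nat.cast_smul_eq_nsmul R, smul_smul, smul_smul,
      ← add_smul, mul_neg, mul_comm, neg_add_cancel, zero_smul]

theorem normalFormₗ_eq_zero_of_mem {q : MvPolynomial ℕ R} (hq : q ∈ carryIdeal R p U) :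
    normalFormₗ R hp U q = 0 := by
  obtain ⟨n, a, g, rfl⟩ := Submodule.mem_span_set'.1 hq
  refine (map_sum _ _ _).trans (Finset.sum_eq_zero fun i _ => ?_)
  obtain ⟨u, hu, hg⟩ := (g i).2
  rw [smul_eq_mul, ← hg, normalFormₗ_mul_carryPoly _ hu]

theorem mk_monomial_eq_smul {σ : Type*} (I : Ideal (MvPolynomial σ R))
    (e : σ →₀ ℕ) (c : R) :
    Ideal.Quotient.mk I (monomial e c) = c • Ideal.Quotient.mk I (monomial e 1) := by
  rw [← Ideal.Quotient.mkₐ_eq_mk R, ← map_smul, smul_monomial, smul_eq_mul, mul_one]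

theorem linearIndependent_mk_monomial (hp : 2 ≤ p) :
    LinearIndependent R fun e : Reduced p U =>
      Ideal.Quotient.mk (carryIdeal R p U) (monomial e.1 (1 : R)) := by
  rw [linearIndependent_iff]
  intro l hl
  have hmem : (l.sum fun e c => monomial e.1 c) ∈ carryIdeal R p U := by
    rw [← Ideal.Quotient.eq_zero_iff_mem, ← hl, linearCombination_apply, map_finsuppSum]
    exact sum_congr fun e _ => mk_monomial_eq_smul _ _ _
  calc l = l.sum fun e c => single e c := (sum_single l).symm
    _ = normalFormₗ R hp U (l.sum fun e c => monomial e.1 c) := by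
      rw [map_finsuppSum]
      exact sum_congr fun e _ => by
        rw [normalFormₗ_monomial, normalForm_of_reduced e.2, smul_single_one]
    _ = 0 := normalFormₗ_eq_zero_of_mem hmem

theorem mk_monomial_eq_neg_smul_carry {e : ℕ →₀ ℕ} {u : ℕ} (hu : u ∈ U) (h : p ≤ e u) :
    Ideal.Quotient.mk (carryIdeal R p U) (monomial e (1 : R))
      = -(p : R) • Ideal.Quotient.mk (carryIdeal R p U) (monomial (carry p e u) 1) := by
  have hsplit : monomial e (1 : R)
      = monomial (e - single u p) 1 * carryPoly R p u - (p : R) • monomial (carry p e u) 1 := by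
    rw [monomial_mul_carryPoly, sub_single_add_single h, ← carry, Nat.cast_smul_eq_nsmul,
      add_sub_cancel_right]
  rw [hsplit, map_sub, Ideal.Quotient.eq_zero_iff_mem.2, zero_sub, ← Ideal.Quotient.mkₐ_eq_mk R,
    map_smul, neg_smul]
  exact Ideal.mul_mem_left _ _ (Ideal.subset_span ⟨u, hu, rfl⟩)

theorem mk_monomial_mem_span (hp : 2 ≤ p) (e : ℕ →₀ ℕ) :
    Ideal.Quotient.mk (carryIdeal R p U) (monomial e (1 : R)) ∈
      Submodule.span R (Set.range fun e : Reduced p U =>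
        Ideal.Quotient.mk (carryIdeal R p U) (monomial e.1 (1 : R))) := by
  induction hn : e.degree using Nat.strong_induction_on generalizing e with
  | _ n ih =>
  by_cases hviol : ∃ u ∈ U, p ≤ e u
  · obtain ⟨u, hu, hpu⟩ := hviol
    rw [mk_monomial_eq_neg_smul_carry hu hpu]
    exact Submodule.smul_mem _ _ (ih _ (hn ▸ degree_carry_lt hp hpu) _ rfl)
  · push Not at hviol
    exact Submodule.subset_span ⟨⟨e, hviol⟩, rfl⟩

theorem span_mk_monomial_eq_top (hp : 2 ≤ p) :
    Submodule.span R (Set.range fun e : Reduced p U =>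
      Ideal.Quotient.mk (carryIdeal R p U) (monomial e.1 (1 : R))) = ⊤ := by
  rw [eq_top_iff]
  rintro z -
  obtain ⟨q, rfl⟩ := Ideal.Quotient.mk_surjective z
  induction q using MvPolynomial.induction_on' with
  | add q₁ q₂ h₁ h₂ => rw [map_add]; exact Submodule.add_mem _ h₁ h₂
  | monomial e c =>
    rw [mk_monomial_eq_smul]
    exact Submodule.smul_mem _ _ (mk_monomial_mem_span hp e)

variable (R U) in
noncomputable def carryBasis (hp : 2 ≤ p) :
    Module.Basis (Reduced p U) R (MvPolynomial ℕ R ⧸ carryIdeal R p U) :=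
  .mk (linearIndependent_mk_monomial hp) (span_mk_monomial_eq_top hp).ge

theorem carryBasis_apply (hp : 2 ≤ p) (e : Reduced p U) :
    carryBasis R U hp e = Ideal.Quotient.mk (carryIdeal R p U) (monomial e.1 1) :=
  Module.Basis.mk_apply _ _ _

noncomputable def Reduced.addSingle {v : ℕ} (hv : v ∉ U) (n : ℕ) (e : Reduced p U) : Reduced p U :=
  ⟨e.1 + single v n, fun u hu => by
    rw [Finsupp.add_apply, single_eq_of_ne (ne_of_mem_of_not_mem hu hv), add_zero]
    exact e.2 u hu⟩

theorem Reduced.addSingle_injective {v : ℕ} (hv : v ∉ U) (n : ℕ) :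
    Injective (Reduced.addSingle (p := p) hv n) :=
  fun _ _ h => Subtype.ext (add_right_cancel (congrArg Subtype.val h))

theorem carryBasis_mul_mk_carryPoly (hp : 2 ≤ p) {N : ℕ} (hN : N ∉ U) (hN' : N + 1 ∉ U)
    (e : Reduced p U) :
    carryBasis R U hp e * Ideal.Quotient.mk (carryIdeal R p U) (carryPoly R p N)
      = carryBasis R U hp (e.addSingle hN p) + (p : R) • carryBasis R U hp (e.addSingle hN' 1) := by
  rw [carryBasis_apply, carryBasis_apply, carryBasis_apply, ← map_mul, monomial_mul_carryPoly,
    map_add, map_nsmul, ← Nat.cast_smul_eq_nsmul R]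
  rfl

theorem repr_mul_mk_carryPoly (hp : 2 ≤ p) {N : ℕ} (hN : N ∉ U) (hN' : N + 1 ∉ U)
    (y : MvPolynomial ℕ R ⧸ carryIdeal R p U) :
    (carryBasis R U hp).repr (y * Ideal.Quotient.mk (carryIdeal R p U) (carryPoly R p N))
      = ((carryBasis R U hp).repr y).mapDomain (Reduced.addSingle hN p)
        + (p : R) • ((carryBasis R U hp).repr y).mapDomain (Reduced.addSingle hN' 1) := by
  set B := carryBasis R U hp
  have hlin : B.repr.toLinearMap ∘ₗ LinearMap.mulRight R (Ideal.Quotient.mk _ (carryPoly R p N))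
      = (lmapDomain R R (Reduced.addSingle hN p)
          + (p : R) • lmapDomain R R (Reduced.addSingle hN' 1)) ∘ₗ B.repr.toLinearMap :=
    B.ext fun e => by simp [B, carryBasis_mul_mk_carryPoly hp hN hN']
  exact LinearMap.congr_fun hlin y

theorem mk_carryPoly_mem_nonZeroDivisors (hp : 2 ≤ p) {N : ℕ} (hN : N ∉ U) (hN' : N + 1 ∉ U) :
    Ideal.Quotient.mk (carryIdeal R p U) (carryPoly R p N) ∈
      nonZeroDivisors (MvPolynomial ℕ R ⧸ carryIdeal R p U) := by
  refine mem_nonZeroDivisors_iff_right.2 fun y hy => (carryBasis R U hp).repr.injective ?_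
  rw [map_zero]
  refine eq_zero_of_mapDomain_add_smul_mapDomain_eq_zero (Reduced.addSingle_injective hN p)
    (Reduced.addSingle_injective hN' 1) (fun e => e.1 N) (fun a b hab => ?_) (p : R) ?_
  · have hN := DFunLike.congr_fun (congrArg Subtype.val hab) N
    simp only [Reduced.addSingle, Finsupp.add_apply, single_eq_same,
      single_eq_of_ne (Nat.ne_add_one N), add_zero] at hN
    omega
  · rw [← repr_mul_mk_carryPoly, hy, map_zero]

end CarryQuotient

open CarryQuotient in
theorem statement16 (R : Type*) [CommRing R] (p : ℕ) (hp : p.Prime) :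
    (∀ N : ℕ,
      Ideal.Quotient.mk
          (Ideal.span {g : MvPolynomial ℕ R |
            ∃ u < N, g = X u ^ p + (p : MvPolynomial ℕ R) * X (u + 1)})
          (X N ^ p + (p : MvPolynomial ℕ R) * X (N + 1)) ∈
        nonZeroDivisors
          (MvPolynomial ℕ R ⧸ Ideal.span {g : MvPolynomial ℕ R |
            ∃ u < N, g = X u ^ p + (p : MvPolynomial ℕ R) * X (u + 1)})) ∧
    ∃ b : Module.Basis {e : ℕ →₀ ℕ // ∀ u, e u < p} R
        (MvPolynomial ℕ R ⧸ Ideal.span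
          (Set.range fun u => X u ^ p + (p : MvPolynomial ℕ R) * X (u + 1))),
      ∀ e : {e : ℕ →₀ ℕ // ∀ u, e u < p},
        b e = Ideal.Quotient.mk
          (Ideal.span (Set.range fun u => X u ^ p + (p : MvPolynomial ℕ R) * X (u + 1)))
          (monomial e.1 1) := by
  refine ⟨fun N => ?_, ?_⟩
  · have hI : Ideal.span {g : MvPolynomial ℕ R |
          ∃ u < N, g = X u ^ p + (p : MvPolynomial ℕ R) * X (u + 1)}
        = carryIdeal R p (Set.Iio N) := by
      rw [carryIdeal]
      congr 1
      ext
      simp [carryPoly, eq_comm]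
    rw [hI]
    exact mk_carryPoly_mem_nonZeroDivisors hp.two_le (lt_irrefl N) (by simp)
  · have hI : Ideal.span (Set.range fun u => X u ^ p + (p : MvPolynomial ℕ R) * X (u + 1))
        = carryIdeal R p Set.univ :=
      congrArg Ideal.span Set.image_univ.symm
    rw [hI]
    refine ⟨(carryBasis R Set.univ hp.two_le).reindex (Equiv.subtypeEquivRight fun e => by simp),
      fun e => ?_⟩
    rw [Module.Basis.reindex_apply, carryBasis_apply]
    rfl
end
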